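/- With Ω the rhombus conv{(1,0),(0,1),(-1,0),(0,-1)} and p_ε as above, any function q that is continuous on Ω, affine on each of the two triangles T₁ = conv{(0,1),(0,-1),(1,0)} and T₂ = conv{(0,-1),(0,1),(-1,0)}, and vanishes on the segment {0}×(-1,1), satisfies ‖p_ε - q‖_{L²(Ω)} ≥ c for some constant c > 0 independent of ε ∈ (0, 1/2] and of q, provided additionally ∫_Ω q = 0. -/

import Mathlib

open MeasureTheory Set Filter Topology

/-!
Continuity across the shared edge, together with `q = 0` there, forces `q(x, y) = a x` on the
right triangle. There `p_ε = 1` once `x > ε`, so on the rectangle `(1/2, 3/4) × (-1/4, 1/4)`,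
which lies in the right triangle and to the right of `ε ≤ 1/2`, the error is `1 - a x`; its
squared `L²` norm there is a quadratic in `a` with positive minimum `1/608`.
-/

def rhombus : Set (ℝ × ℝ) := {z | |z.1| + |z.2| < 1}

lemma isOpen_rhombus : IsOpen rhombus :=
  isOpen_lt (by fun_prop) continuous_const

lemma measurableSet_rhombus : MeasurableSet rhombus :=
  isOpen_rhombus.measurableSet

lemma abs_le_one_of_mem_rhombus {z : ℝ × ℝ} (hz : z ∈ rhombus) : |z.1| ≤ 1 ∧ |z.2| ≤ 1 := by
  have : |z.1| + |z.2| < 1 := hz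
  constructor <;> linarith [abs_nonneg z.1, abs_nonneg z.2]

lemma volume_rhombus_lt_top : volume rhombus < ⊤ := by
  refine ((Metric.isBounded_ball (x := (0 : ℝ × ℝ)) (r := 1)).subset fun z hz => ?_).measure_lt_top
  have : |z.1| + |z.2| < 1 := hz
  rw [mem_ball_zero_iff, Prod.norm_def, Real.norm_eq_abs, Real.norm_eq_abs, max_lt_iff]
  constructor <;> linarith [abs_nonneg z.1, abs_nonneg z.2]

lemma abs_affine_le {a b c x y : ℝ} (hx : |x| ≤ 1) (hy : |y| ≤ 1) :
    |a * x + b * y + c| ≤ |a| + |b| + |c| := by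
  calc |a * x + b * y + c| ≤ |a * x| + |b * y| + |c| := abs_add_three _ _ _
    _ ≤ |a| + |b| + |c| := by
      rw [abs_mul, abs_mul]
      gcongr
      · exact mul_le_of_le_one_right (abs_nonneg a) hx
      · exact mul_le_of_le_one_right (abs_nonneg b) hy

section PiecewiseAffine

variable {q : ℝ × ℝ → ℝ} {a₁ b₁ c₁ a₂ b₂ c₂ : ℝ}

lemma abs_le_of_piecewise_affine
    (h₁ : ∀ z ∈ rhombus, 0 < z.1 → q z = a₁ * z.1 + b₁ * z.2 + c₁)
    (h₂ : ∀ z ∈ rhombus, z.1 < 0 → q z = a₂ * z.1 + b₂ * z.2 + c₂)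
    (h₀ : ∀ y ∈ Ioo (-1 : ℝ) 1, q (0, y) = 0) {z : ℝ × ℝ} (hz : z ∈ rhombus) :
    |q z| ≤ (|a₁| + |b₁| + |c₁|) + (|a₂| + |b₂| + |c₂|) := by
  obtain ⟨hx, hy⟩ := abs_le_one_of_mem_rhombus hz
  have hT₁ := abs_affine_le (a := a₁) (b := b₁) (c := c₁) hx hy
  have hT₂ := abs_affine_le (a := a₂) (b := b₂) (c := c₂) hx hy
  rcases lt_trichotomy z.1 0 with hneg | hzero | hpos
  · rw [h₂ z hz hneg]; linarith [abs_nonneg a₁, abs_nonneg b₁, abs_nonneg c₁]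
  · obtain ⟨x, y⟩ := z
    obtain rfl : x = 0 := hzero
    have hy : |y| < 1 := by simpa [rhombus] using hz
    rw [h₀ y (abs_lt.mp hy), abs_zero]
    positivity
  · rw [h₁ z hz hpos]; linarith [abs_nonneg a₂, abs_nonneg b₂, abs_nonneg c₂]

lemma eq_of_continuousWithinAt_of_affine_right {y : ℝ} (hy : |y| < 1)
    (hq : ContinuousWithinAt q rhombus (0, y))
    (h₁ : ∀ z ∈ rhombus, 0 < z.1 → q z = a₁ * z.1 + b₁ * z.2 + c₁) :
    q (0, y) = b₁ * y + c₁ := by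
  have hright : ∀ᶠ x in 𝓝[>] (0 : ℝ), ((x, y) : ℝ × ℝ) ∈ rhombus ∧ 0 < x := by
    filter_upwards [Ioo_mem_nhdsGT (by linarith : (0 : ℝ) < 1 - |y|)] with x hx
    refine ⟨?_, hx.1⟩
    show |x| + |y| < 1
    rw [abs_of_pos hx.1]
    linarith [hx.2]
  have hpath : Tendsto (fun x : ℝ => ((x, y) : ℝ × ℝ)) (𝓝[>] 0) (𝓝[rhombus] (0, y)) :=
    tendsto_nhdsWithin_of_tendsto_nhds_of_eventually_within _
      ((Continuous.prodMk_left y).continuousAt.tendsto.mono_left nhdsWithin_le_nhds)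
      (hright.mono fun _ hx => hx.1)
  have hlim : Tendsto (fun x : ℝ => a₁ * x + b₁ * y + c₁) (𝓝[>] 0) (𝓝 (b₁ * y + c₁)) :=
    (Continuous.tendsto' (by fun_prop) 0 _ (by simp)).mono_left nhdsWithin_le_nhds
  refine tendsto_nhds_unique (hq.tendsto.comp hpath) (hlim.congr' ?_)
  filter_upwards [hright] with x hx
  exact (h₁ (x, y) hx.1 hx.2).symm

lemma affine_right_eq_mul_fst (hq : ContinuousOn q rhombus)
    (h₁ : ∀ z ∈ rhombus, 0 < z.1 → q z = a₁ * z.1 + b₁ * z.2 + c₁)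
    (h₀ : ∀ y ∈ Ioo (-1 : ℝ) 1, q (0, y) = 0) :
    ∀ z ∈ rhombus, 0 < z.1 → q z = a₁ * z.1 := by
  have htrace : ∀ y : ℝ, |y| < 1 → b₁ * y + c₁ = 0 := fun y hy => by
    rw [← eq_of_continuousWithinAt_of_affine_right hy (hq _ (by simpa [rhombus] using hy)) h₁]
    exact h₀ y (abs_lt.mp hy)
  have h0 := htrace 0 (by norm_num)
  have h1 := htrace (1 / 2) (by norm_num [abs_of_pos])
  intro z hz hx
  rw [h₁ z hz hx]
  linear_combination (1 - 2 * z.2) * h0 + 2 * z.2 * h1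

end PiecewiseAffine

lemma integrableOn_sq_sub_of_abs_le {α : Type*} [MeasurableSpace α] {μ : Measure α} {s : Set α}
    {f g : α → ℝ} {A B : ℝ} (hs : μ s < ⊤) (hsm : MeasurableSet s)
    (hf : AEStronglyMeasurable f (μ.restrict s)) (hg : AEStronglyMeasurable g (μ.restrict s))
    (hfA : ∀ z ∈ s, |f z| ≤ A) (hgB : ∀ z ∈ s, |g z| ≤ B) :
    IntegrableOn (fun z => (f z - g z) ^ 2) s μ := by
  refine .of_bound hs ((hf.sub hg).pow 2) ((A + B) ^ 2)
    (ae_restrict_of_forall_mem hsm fun z hz => ?_)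
  rw [Real.norm_eq_abs, abs_pow]
  exact pow_le_pow_left₀ (abs_nonneg _) ((abs_sub _ _).trans (add_le_add (hfA z hz) (hgB z hz))) 2

noncomputable def exactPressure (ε : ℝ) (z : ℝ × ℝ) : ℝ :=
  if z.1 ≤ -ε then -1 else if z.1 ≤ ε then z.1 / ε else 1

lemma measurable_exactPressure (ε : ℝ) : Measurable (exactPressure ε) :=
  Measurable.ite (measurableSet_le measurable_fst measurable_const) measurable_const <|
    Measurable.ite (measurableSet_le measurable_fst measurable_const)
      (measurable_fst.div_const ε) measurable_const

lemma abs_exactPressure_le_one {ε : ℝ} (hε : 0 < ε) (z : ℝ × ℝ) : |exactPressure ε z| ≤ 1 := by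
  unfold exactPressure
  split_ifs with hl hr
  · simp
  · rw [abs_div, abs_of_pos hε, div_le_one hε, abs_le]
    constructor <;> linarith
  · simp

lemma exactPressure_of_lt {ε : ℝ} {z : ℝ × ℝ} (hε : 0 ≤ ε) (h : ε < z.1) :
    exactPressure ε z = 1 := by
  rw [exactPressure, if_neg (by linarith), if_neg (by linarith)]

lemma integral_one_sub_mul_sq (a : ℝ) :
    ∫ x in (1 / 2 : ℝ)..(3 / 4), (1 - a * x) ^ 2 = 1 / 4 - 5 / 16 * a + 19 / 192 * a ^ 2 := by
  have hderiv : ∀ x ∈ uIcc (1 / 2 : ℝ) (3 / 4),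
      HasDerivAt (fun x : ℝ => x - a * x ^ 2 + a ^ 2 * x ^ 3 / 3) ((1 - a * x) ^ 2) x := fun x _ =>
    (((hasDerivAt_id x).sub ((hasDerivAt_pow 2 x).const_mul a)).add
      (((hasDerivAt_pow 3 x).const_mul (a ^ 2)).div_const 3)).congr_deriv (by simp; ring)
  rw [intervalIntegral.integral_eq_sub_of_hasDerivAt hderiv
    (Continuous.intervalIntegrable (by fun_prop) _ _)]
  ring

lemma one_div_608_le_setIntegral_one_sub_mul_sq (a : ℝ) :
    1 / 608 ≤ ∫ z in Ioo (1 / 2 : ℝ) (3 / 4) ×ˢ Ioo (-(1 / 4) : ℝ) (1 / 4), (1 - a * z.1) ^ 2 := by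
  have hprod := setIntegral_prod_mul (μ := volume) (ν := volume) (fun x : ℝ => (1 - a * x) ^ 2)
    (fun _ : ℝ => (1 : ℝ)) (Ioo (1 / 2) (3 / 4)) (Ioo (-(1 / 4)) (1 / 4))
  simp only [mul_one] at hprod
  rw [Measure.volume_eq_prod, hprod, ← integral_Ioc_eq_integral_Ioo, ← intervalIntegral.integral_of_le (by norm_num),
    integral_one_sub_mul_sq]
  norm_num [Real.volume_Ioo]
  nlinarith [sq_nonneg (19 * a - 30)]

lemma Ioo_prod_Ioo_subset_rhombus :
    Ioo (1 / 2 : ℝ) (3 / 4) ×ˢ Ioo (-(1 / 4) : ℝ) (1 / 4) ⊆ rhombus := by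
  rintro ⟨x, y⟩ ⟨⟨hx₁, hx₂⟩, hy⟩
  show |x| + |y| < 1
  rw [abs_of_pos (by linarith)]
  linarith [abs_lt.mpr hy]

/-- On the rhombus `Ω = {|x|+|y| < 1}` with the two-triangle triangulation
(right triangle `T₁ = Ω ∩ {x > 0}` and left triangle `T₂ = Ω ∩ {x < 0}`),
there exists `c > 0` such that for every `ε ∈ (0, 1/2]` and every function
`q` which is continuous on `Ω`, affine on each of the two triangles,
vanishes on the segment `{0} × (-1,1)` and has zero mean over `Ω`, the
L² distance of the exact pressure `p_ε` to `q` is at least `c`. -/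
theorem rhombus_continuous_pressure_lower_bound :
    ∃ c : ℝ, 0 < c ∧
      ∀ ε : ℝ, ε ∈ Set.Ioc (0 : ℝ) (1 / 2) →
      ∀ q : ℝ × ℝ → ℝ,
        ContinuousOn q {z : ℝ × ℝ | |z.1| + |z.2| < 1} →
        (∃ a₁ b₁ c₁ : ℝ, ∀ z ∈ {z : ℝ × ℝ | 0 < z.1 ∧ |z.1| + |z.2| < 1},
            q z = a₁ * z.1 + b₁ * z.2 + c₁) →
        (∃ a₂ b₂ c₂ : ℝ, ∀ z ∈ {z : ℝ × ℝ | z.1 < 0 ∧ |z.1| + |z.2| < 1},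
            q z = a₂ * z.1 + b₂ * z.2 + c₂) →
        (∀ y : ℝ, y ∈ Set.Ioo (-1 : ℝ) 1 → q ((0 : ℝ), y) = 0) →
        (∫ z in {z : ℝ × ℝ | |z.1| + |z.2| < 1}, q z) = 0 →
        c ≤ Real.sqrt (∫ z in {z : ℝ × ℝ | |z.1| + |z.2| < 1},
              ((if z.1 ≤ -ε then (-1 : ℝ) else if z.1 ≤ ε then z.1 / ε else 1)
                - q z) ^ 2) := by
  refine ⟨√(1 / 608), by positivity, ?_⟩
  rintro ε ⟨hε₀, hε⟩ q hq ⟨a₁, b₁, c₁, h₁⟩ ⟨a₂, b₂, c₂, h₂⟩ h₀ -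
  change √(1 / 608) ≤ √(∫ z in rhombus, (exactPressure ε z - q z) ^ 2)
  replace h₁ : ∀ z ∈ rhombus, 0 < z.1 → q z = a₁ * z.1 + b₁ * z.2 + c₁ := fun z hz hx =>
    h₁ z ⟨hx, hz⟩
  replace h₂ : ∀ z ∈ rhombus, z.1 < 0 → q z = a₂ * z.1 + b₂ * z.2 + c₂ := fun z hz hx =>
    h₂ z ⟨hx, hz⟩
  have hint : IntegrableOn (fun z => (exactPressure ε z - q z) ^ 2) rhombus := by
    exact integrableOn_sq_sub_of_abs_le volume_rhombus_lt_top measurableSet_rhombus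
      (measurable_exactPressure ε).aestronglyMeasurable
      (hq.aestronglyMeasurable measurableSet_rhombus)
      (fun z _ => abs_exactPressure_le_one hε₀ z) (fun z hz => abs_le_of_piecewise_affine h₁ h₂ h₀ hz)
  have hq₁ := affine_right_eq_mul_fst hq h₁ h₀
  gcongr
  calc 1 / 608
      ≤ ∫ z in Ioo (1 / 2 : ℝ) (3 / 4) ×ˢ Ioo (-(1 / 4) : ℝ) (1 / 4), (1 - a₁ * z.1) ^ 2 :=
        one_div_608_le_setIntegral_one_sub_mul_sq a₁
    _ = ∫ z in Ioo (1 / 2 : ℝ) (3 / 4) ×ˢ Ioo (-(1 / 4) : ℝ) (1 / 4),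
          (exactPressure ε z - q z) ^ 2 := by
        refine setIntegral_congr_fun (measurableSet_Ioo.prod measurableSet_Ioo) fun z hz => ?_
        rw [exactPressure_of_lt hε₀.le (hε.trans_lt hz.1.1),
          hq₁ z (Ioo_prod_Ioo_subset_rhombus hz) (by linarith [hz.1.1])]
    _ ≤ ∫ z in rhombus, (exactPressure ε z - q z) ^ 2 :=
        setIntegral_mono_set hint (ae_of_all _ fun _ => sq_nonneg _)
          (Eventually.of_forall Ioo_prod_Ioo_subset_rhombus)
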